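/- arXiv:2301.11957 — 9 statements merged into one kernel-verified Lean document; each statement's English description precedes it below -/
import Mathlib

section
/- If Φ : X ⇉ X* is cone-valued, norm-to-weak* cone upper semicontinuous at every point, and Φ(x) admits a base for each x ∈ X, then dom Φ = {x : Φ(x) ≠ ∅} is closed in X. -/
open Topology Filter

def IsCone {D : Type*} [SMul ℝ D] (K : Set D) : Prop :=
  ∀ p ∈ K, ∀ t : ℝ, 0 < t → t • p ∈ K

def IsBase {D : Type*} [AddCommMonoid D] [Module ℝ D] [TopologicalSpace D]
    (K A : Set D) : Prop :=
  Convex ℝ A ∧ A ⊆ K ∧ K = {p | ∃ t : ℝ, 0 ≤ t ∧ ∃ a ∈ A, p = t • a} ∧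
    (0 : D) ∉ closure A

def ConeUSCAt {Y D : Type*} [TopologicalSpace Y] [SMul ℝ D] [TopologicalSpace D] [Zero D]
    (Φ : Y → Set D) (x : Y) : Prop :=
  ∀ Ω : Set D, IsOpen Ω → IsCone Ω → Φ x ⊆ Ω ∪ {0} →
    ∀ᶠ x' in 𝓝 x, Φ x' ⊆ Ω ∪ {0}

/-! At a point `x` outside the domain, `Φ x = ∅` lies in the open cone `∅ ∪ {0}`, so by cone upper
semicontinuity `Φ x' ⊆ {0}` near `x`. A cone with a base is never `{0}`, since a base avoids `0`;
hence `Φ x' = ∅` near `x`, and the complement of the domain is open. -/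

theorem isCone_empty {D : Type*} [SMul ℝ D] : IsCone (∅ : Set D) :=
  fun _ hp _ _ => hp.elim

theorem IsBase.eq_empty_of_subset_zero {D : Type*} [AddCommMonoid D] [Module ℝ D]
    [TopologicalSpace D] {K A : Set D} (hA : IsBase K A) (hK : K ⊆ {0}) : K = ∅ := by
  obtain ⟨-, hAK, hKA, h0⟩ := hA
  refine Set.eq_empty_iff_forall_notMem.2 fun p hp => ?_
  rw [hKA] at hp
  obtain ⟨-, -, a, ha, -⟩ := hp
  have ha0 : a = 0 := hK (hAK ha)
  exact h0 (subset_closure (ha0 ▸ ha))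

theorem ConeUSCAt.eventually_subset_zero {Y D : Type*} [TopologicalSpace Y] [SMul ℝ D]
    [TopologicalSpace D] [Zero D] {Φ : Y → Set D} {x : Y} (h : ConeUSCAt Φ x)
    (hx : Φ x = ∅) : ∀ᶠ x' in 𝓝 x, Φ x' ⊆ {0} := by
  simpa using h ∅ isOpen_empty isCone_empty (by simp [hx])

theorem dom_closed_of_coneUSC_and_base_general
    {X : Type*} [NormedAddCommGroup X] [NormedSpace ℝ X]
    (Φ : X → Set (WeakDual ℝ X))
    (husc : ∀ x, ConeUSCAt Φ x) (hbase : ∀ x, ∃ A, IsBase (Φ x) A) :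
    IsClosed {x : X | (Φ x).Nonempty} := by
  rw [← isOpen_compl_iff, isOpen_iff_mem_nhds]
  intro x hx
  have hempty : Φ x = ∅ := Set.not_nonempty_iff_eq_empty.1 hx
  filter_upwards [(husc x).eventually_subset_zero hempty] with y hy
  obtain ⟨A, hA⟩ := hbase y
  exact Set.not_nonempty_iff_eq_empty.2 (hA.eq_empty_of_subset_zero hy)

/-- If `Φ : X ⇉ X*` is cone-valued, norm-to-weak* cone upper semicontinuous at every
point, and each `Φ x` admits a base, then `dom Φ = {x | Φ x ≠ ∅}` is closed. -/
theorem dom_closed_of_coneUSC_and_base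
    {X : Type*} [NormedAddCommGroup X] [NormedSpace ℝ X] [CompleteSpace X]
    (Φ : X → Set (WeakDual ℝ X)) (hcone : ∀ x, IsCone (Φ x))
    (husc : ∀ x, ConeUSCAt Φ x) (hbase : ∀ x, ∃ A, IsBase (Φ x) A) :
    IsClosed {x : X | (Φ x).Nonempty} :=
  dom_closed_of_coneUSC_and_base_general Φ husc hbase
end

section
/- If a cone-valued map Φ : X ⇉ X* is norm-to-weak* base upper semicontinuous at x ∈ X, then it is norm-to-weak* cone upper semicontinuous at x. -/
open Topology Filter

def USCAt {Y Z : Type*} [TopologicalSpace Y] [TopologicalSpace Z]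
    (A : Y → Set Z) (x : Y) : Prop :=
  ∀ Ω : Set Z, IsOpen Ω → A x ⊆ Ω → ∀ᶠ x' in 𝓝 x, A x' ⊆ Ω

def BaseUSCAt {Y D : Type*} [TopologicalSpace Y]
    [AddCommMonoid D] [Module ℝ D] [TopologicalSpace D]
    (Φ : Y → Set D) (x : Y) : Prop :=
  ∃ U ∈ 𝓝 x, ∃ A : Y → Set D, (∀ x' ∈ U, IsBase (Φ x') (A x')) ∧ USCAt A x

/-!
A base `A x'` of `Φ x'` misses `0`, so `Φ x ⊆ Ω ∪ {0}` forces `A x ⊆ Ω`; upper semicontinuity of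
`A` keeps `A x' ⊆ Ω` near `x`, and since `Φ x' = ℝ≥0 • A x'` and `Ω` is a cone, `Φ x' ⊆ Ω ∪ {0}`.
-/

namespace IsBase

variable {D : Type*} [AddCommMonoid D] [Module ℝ D] [TopologicalSpace D] {K A Ω : Set D}

theorem subset_of_subset_union_zero (hA : IsBase K A) (hK : K ⊆ Ω ∪ {0}) : A ⊆ Ω := by
  intro a ha
  rcases hK (hA.2.1 ha) with haΩ | rfl
  · exact haΩ
  · exact absurd (subset_closure ha) hA.2.2.2

theorem subset_union_zero (hA : IsBase K A) (hΩ : IsCone Ω) (hAΩ : A ⊆ Ω) :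
    K ⊆ Ω ∪ {0} := by
  rw [hA.2.2.1]
  rintro _ ⟨t, ht, a, ha, rfl⟩
  rcases ht.eq_or_lt with rfl | ht
  · exact Or.inr (zero_smul ℝ a)
  · exact Or.inl (hΩ a (hAΩ ha) t ht)

end IsBase

theorem baseUSCAt_implies_coneUSCAt_general
    {X : Type*} [NormedAddCommGroup X] [NormedSpace ℝ X]
    (Φ : X → Set (WeakDual ℝ X))
    (x : X) (h : BaseUSCAt Φ x) : ConeUSCAt Φ x := by
  obtain ⟨U, hU, A, hbase, husc⟩ := h
  intro Ω hΩ hΩcone hΦx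
  have hAx : A x ⊆ Ω := (hbase x (mem_of_mem_nhds hU)).subset_of_subset_union_zero hΦx
  filter_upwards [hU, husc Ω hΩ hAx] with x' hx' hAx'
  exact (hbase x' hx').subset_union_zero hΩcone hAx'

/-- Norm-to-weak* base upper semicontinuity of a cone-valued map at a point implies
norm-to-weak* cone upper semicontinuity at that point. -/
theorem baseUSCAt_implies_coneUSCAt
    {X : Type*} [NormedAddCommGroup X] [NormedSpace ℝ X] [CompleteSpace X]
    (Φ : X → Set (WeakDual ℝ X)) (hcone : ∀ x, IsCone (Φ x))
    (x : X) (h : BaseUSCAt Φ x) : ConeUSCAt Φ x :=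
  baseUSCAt_implies_coneUSCAt_general Φ x h
end

section
/- Let Φ : X ⇉ X* be a cone-valued map which is norm-to-weak* cone upper semicontinuous at x ∈ dom Φ. If Φ(x) has a weak*-compact base, then Φ is norm-to-weak* closed at x, i.e., for every net (x_α, x*_α) with x*_α ∈ Φ(x_α) converging to (x, x*) in the norm × weak* topology, one has x* ∈ Φ(x). -/
open Topology Filter

instance weakDualLCS (X : Type*) [NormedAddCommGroup X] [NormedSpace ℝ X] :
    LocallyConvexSpace ℝ (WeakDual ℝ X) :=
  inferInstanceAs (LocallyConvexSpace ℝ (WeakBilin (topDualPairing ℝ X)))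

set_option maxHeartbeats 1000000 in
/-- If a cone-valued map `Φ : X ⇉ X*` is norm-to-weak* cone upper semicontinuous at
`x ∈ dom Φ` and `Φ x` has a weak*-compact base, then `Φ` is norm-to-weak* closed at
`x`: whenever a net `(x_α, x*_α)` with `x*_α ∈ Φ x_α` converges to `(x, x*)` in the
norm × weak* topology (i.e. `(x, x*)` lies in the closure of the graph of `Φ` in the
product topology), one has `x* ∈ Φ x`. -/
theorem coneUSCAt_compactBase_implies_closedAt
    {X : Type*} [NormedAddCommGroup X] [NormedSpace ℝ X] [CompleteSpace X]
    (Φ : X → Set (WeakDual ℝ X)) (hcone : ∀ x, IsCone (Φ x))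
    (x : X) (hdom : (Φ x).Nonempty) (husc : ConeUSCAt Φ x)
    (A : Set (WeakDual ℝ X)) (hA : IsBase (Φ x) A) (hAcomp : IsCompact A) :
    ∀ p : WeakDual ℝ X,
      (x, p) ∈ closure {q : X × WeakDual ℝ X | q.2 ∈ Φ q.1} → p ∈ Φ x := by
  intro p hclos
  obtain ⟨hAconv, hAsub, hKeq, h0A⟩ := hA
  -- A is nonempty
  obtain ⟨k0, hk0⟩ := hdom
  rw [hKeq] at hk0
  obtain ⟨t0, ht0, a0, ha0A, hk0eq⟩ := hk0
  -- separate 0 from A : a functional g with g > δ > 0 on A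
  obtain ⟨f₁, u₁, hf₁, hu₁⟩ :=
    geometric_hahn_banach_closed_point hAconv.closure isClosed_closure h0A
  have hu₁0 : u₁ < 0 := by simpa using hu₁
  set g : WeakDual ℝ X →L[ℝ] ℝ := -f₁ with hgdef
  set δ : ℝ := -u₁ with hδdef
  have hδpos : 0 < δ := by simp [hδdef]; linarith
  have hgA : ∀ a ∈ A, δ < g a := by
    intro a ha
    have := hf₁ a (subset_closure ha)
    simp only [hgdef, hδdef, ContinuousLinearMap.neg_apply]
    linarith
  -- Φ x is convex
  have hKconv : Convex ℝ (Φ x) := by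
    rw [hKeq]
    rintro p₁ ⟨t₁, ht₁, a₁, ha₁, rfl⟩ p₂ ⟨t₂, ht₂, a₂, ha₂, rfl⟩ l m hl hm hlm
    by_cases hT : l * t₁ + m * t₂ = 0
    · have hlt : 0 ≤ l * t₁ := mul_nonneg hl ht₁
      have hmt : 0 ≤ m * t₂ := mul_nonneg hm ht₂
      have h1 : l * t₁ = 0 := by linarith
      have h2 : m * t₂ = 0 := by linarith
      exact ⟨0, le_refl 0, a₁, ha₁, by
        rw [smul_smul, smul_smul, h1, h2, zero_smul, zero_smul, add_zero]⟩
    · have hTpos : 0 < l * t₁ + m * t₂ :=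
        lt_of_le_of_ne (by positivity) (Ne.symm hT)
      refine ⟨l * t₁ + m * t₂, hTpos.le,
        (l * t₁ / (l * t₁ + m * t₂)) • a₁ + (m * t₂ / (l * t₁ + m * t₂)) • a₂,
        hAconv ha₁ ha₂ (by positivity) (by positivity) (by field_simp), ?_⟩
      rw [smul_add, smul_smul, smul_smul, smul_smul, smul_smul,
        mul_div_cancel₀ _ hT, mul_div_cancel₀ _ hT]
  -- Φ x is closed
  have hKclosed : IsClosed (Φ x) := by
    apply isClosed_of_closure_subset
    intro q hq
    set C : ℝ := max 0 ((g q + 1) / δ) with hCdef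
    have hVopen : IsOpen {r : WeakDual ℝ X | g r < g q + 1} :=
      isOpen_lt g.continuous continuous_const
    have hqV : q ∈ {r : WeakDual ℝ X | g r < g q + 1} := by
      simp only [Set.mem_setOf_eq]; linarith
    have hcomp : IsCompact ((fun ta : ℝ × WeakDual ℝ X => ta.1 • ta.2) ''
        (Set.Icc 0 C ×ˢ A)) :=
      (isCompact_Icc.prod hAcomp).image (continuous_fst.smul continuous_snd)
    have hsub : Φ x ∩ {r : WeakDual ℝ X | g r < g q + 1} ⊆
        (fun ta : ℝ × WeakDual ℝ X => ta.1 • ta.2) '' (Set.Icc 0 C ×ˢ A) := by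
      rintro r ⟨hrK, hrV⟩
      rw [hKeq] at hrK
      obtain ⟨t, ht, a, haA, rfl⟩ := hrK
      refine ⟨(t, a), ⟨⟨ht, ?_⟩, haA⟩, rfl⟩
      have hga := hgA a haA
      have h1 : t * g a < g q + 1 := by
        simpa [map_smul, smul_eq_mul] using hrV
      have h2 : t * δ ≤ t * g a := mul_le_mul_of_nonneg_left hga.le ht
      have h3 : t ≤ (g q + 1) / δ := by
        rw [le_div_iff₀ hδpos]; linarith
      exact h3.trans (le_max_right _ _)
    have hq2 : q ∈ closure (Φ x ∩ {r : WeakDual ℝ X | g r < g q + 1}) :=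
      hVopen.closure_inter ⟨hq, hqV⟩
    have hq3 : q ∈ (fun ta : ℝ × WeakDual ℝ X => ta.1 • ta.2) ''
        (Set.Icc 0 C ×ˢ A) := by
      have := (closure_mono hsub) hq2
      rwa [hcomp.isClosed.closure_eq] at this
    obtain ⟨⟨t, a⟩, ⟨⟨ht0', _⟩, haA⟩, rfl⟩ := hq3
    rw [hKeq]
    exact ⟨t, ht0', a, haA, rfl⟩
  -- suppose p ∉ Φ x, separate
  by_contra hpK
  obtain ⟨f₂, u₂, hf₂, hu₂⟩ := geometric_hahn_banach_closed_point hKconv hKclosed hpK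
  have h0K : (0 : WeakDual ℝ X) ∈ Φ x := by
    rw [hKeq]; exact ⟨0, le_refl 0, a0, ha0A, (zero_smul ℝ a0).symm⟩
  have hu₂pos : 0 < u₂ := by simpa using hf₂ 0 h0K
  have hf₂nonpos : ∀ k ∈ Φ x, f₂ k ≤ 0 := by
    intro k hk
    by_contra hpos
    push_neg at hpos
    have hT : 0 < (u₂ + 1) / f₂ k := by positivity
    have := hf₂ _ (hcone x k hk _ hT)
    rw [map_smul, smul_eq_mul, div_mul_cancel₀ _ (ne_of_gt hpos)] at this
    linarith
  set M : ℝ := max (g p) 1 with hMdef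
  have hM : 0 < M := lt_of_lt_of_le one_pos (le_max_right _ _)
  set ε : ℝ := u₂ / (2 * M) with hεdef
  have hε : 0 < ε := by positivity
  set h : WeakDual ℝ X →L[ℝ] ℝ := ε • g - f₂ with hhdef
  have hh : ∀ q : WeakDual ℝ X, h q = ε * g q - f₂ q := by
    intro q
    simp [hhdef, ContinuousLinearMap.sub_apply, ContinuousLinearMap.smul_apply,
      smul_eq_mul]
  have hhp : h p < 0 := by
    have h1 : ε * g p ≤ ε * M := mul_le_mul_of_nonneg_left (le_max_left _ _) hε.le
    have h2 : ε * M = u₂ / 2 := by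
      rw [hεdef]; field_simp
    rw [hh]; linarith
  have hhA : ∀ a ∈ A, 0 < h a := by
    intro a ha
    have h1 := hgA a ha
    have h2 := hf₂nonpos a (hAsub ha)
    have h3 : ε * δ < ε * g a := mul_lt_mul_of_pos_left h1 hε
    have h4 : 0 < ε * δ := mul_pos hε hδpos
    rw [hh]; linarith
  set Ω : Set (WeakDual ℝ X) := {q | 0 < h q} with hΩdef
  have hΩopen : IsOpen Ω := isOpen_lt continuous_const h.continuous
  have hΩcone : IsCone Ω := by
    intro q hq t ht
    simp only [hΩdef, Set.mem_setOf_eq, map_smul, smul_eq_mul] at hq ⊢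
    exact mul_pos ht hq
  have hsubΩ : Φ x ⊆ Ω ∪ {0} := by
    intro k hk
    rw [hKeq] at hk
    obtain ⟨t, ht, a, haA, rfl⟩ := hk
    rcases eq_or_lt_of_le ht with h0 | h0
    · right; simp [← h0]
    · left
      show 0 < h (t • a)
      rw [map_smul, smul_eq_mul]
      exact mul_pos h0 (hhA a haA)
  have hU : {x' | Φ x' ⊆ Ω ∪ {0}} ∈ 𝓝 x := husc Ω hΩopen hΩcone hsubΩ
  have hW : ({x' | Φ x' ⊆ Ω ∪ {0}} ×ˢ {q : WeakDual ℝ X | h q < 0}) ∈ 𝓝 (x, p) :=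
    prod_mem_nhds hU ((isOpen_lt h.continuous continuous_const).mem_nhds hhp)
  obtain ⟨⟨x', p'⟩, ⟨hx', hp'neg⟩, hp'mem⟩ := mem_closure_iff_nhds.mp hclos _ hW
  simp only [Set.mem_setOf_eq] at hp'neg
  rcases hx' hp'mem with hΩ' | h0'
  · simp only [hΩdef, Set.mem_setOf_eq] at hΩ'
    linarith
  · have hp0 : p' = 0 := h0'
    rw [hp0, map_zero] at hp'neg
    exact absurd hp'neg (lt_irrefl 0)
end

section
/- An extended-real-valued function f : X → ℝ ∪ {+∞} is quasiconvex if and only if the adjusted sublevel set S^a_f(x) is convex for every x ∈ X. -/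
/-!
If `f` is quasiconvex, the strict sublevel set `S^<_{f(x)}` is convex, hence so is its closed
`ρ_x`-thickening, and `S^a_f(x)` is an intersection of two convex sets. Conversely, any two
points `y₁, y₂` lie in a common adjusted sublevel set `S^a_f(c)` with `f c = max (f y₁) (f y₂)`:
take `c` to be the point with the larger value, and if the values agree, the one farther from
the common strict sublevel set. Convexity of `S^a_f(c) ⊆ S_{f(c)}` then gives the
max-inequality characterising quasiconvexity.
-/

open Metric Classical

variable {X : Type*} [NormedAddCommGroup X] [NormedSpace ℝ X] [CompleteSpace X]

/-- The adjusted sublevel set `S^a_f(x)`. -/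
noncomputable def adjSublevel (f : X → EReal) (x : X) : Set X :=
  if ∀ z : X, f x ≤ f z then {y | f y ≤ f x}
  else {y | f y ≤ f x} ∩
    {y | infDist y {z | f z < f x} ≤ infDist x {z | f z < f x}}

open Set

theorem quasiconvexOn_univ_iff_convex_setOf_le_coe {𝕜 E : Type*} [Semiring 𝕜] [PartialOrder 𝕜]
    [AddCommMonoid E] [SMul 𝕜 E] {f : E → EReal} :
    QuasiconvexOn 𝕜 univ f ↔ ∀ l : ℝ, Convex 𝕜 {y | f y ≤ l} := by
  refine ⟨fun hf l => by simpa using hf l, fun h => ?_⟩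
  refine quasiconvexOn_iff_le_max.2 ⟨convex_univ, fun x _ y _ a b ha hb hab => ?_⟩
  refine le_of_forall_gt_imp_ge_of_dense fun r hr => ?_
  obtain ⟨l, hml, hlr⟩ := EReal.exists_between_coe_real hr
  have hx : f x ≤ l := (le_max_left _ _).trans hml.le
  have hy : f y ≤ l := (le_max_right _ _).trans hml.le
  exact (h l hx hy ha hb hab).trans hlr.le

theorem Metric.setOf_infDist_le_eq_cthickening {α : Type*} [PseudoMetricSpace α] {S : Set α}
    (hS : S.Nonempty) {r : ℝ} (hr : 0 ≤ r) : {y | infDist y S ≤ r} = cthickening r S := by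
  ext y
  rw [mem_cthickening_iff, mem_ofPred_eq, infDist,
    ← ENNReal.le_ofReal_iff_toReal_le (infEDist_ne_top hS) hr]

theorem Convex.setOf_infDist_le {E : Type*} [NormedAddCommGroup E] [NormedSpace ℝ E]
    {S : Set E} (hS : Convex ℝ S) (hne : S.Nonempty) {r : ℝ} (hr : 0 ≤ r) :
    Convex ℝ {y | infDist y S ≤ r} := by
  rw [setOf_infDist_le_eq_cthickening hne hr]
  exact hS.cthickening r

section AdjSublevel

variable {E : Type*} [NormedAddCommGroup E] {f : E → EReal}

theorem adjSublevel_subset_setOf_le (x : E) : adjSublevel f x ⊆ {y | f y ≤ f x} := by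
  unfold adjSublevel
  split_ifs
  exacts [subset_rfl, inter_subset_left]

theorem mem_adjSublevel_of_infDist_le {x y : E} (hle : f y ≤ f x)
    (hdist : infDist y {z | f z < f x} ≤ infDist x {z | f z < f x}) : y ∈ adjSublevel f x := by
  unfold adjSublevel
  split_ifs
  exacts [hle, ⟨hle, hdist⟩]

theorem self_mem_adjSublevel (x : E) : x ∈ adjSublevel f x :=
  mem_adjSublevel_of_infDist_le le_rfl le_rfl

theorem mem_adjSublevel_of_lt {x y : E} (hlt : f y < f x) : y ∈ adjSublevel f x :=
  mem_adjSublevel_of_infDist_le hlt.le ((infDist_zero_of_mem (s := {z | f z < f x}) hlt).trans_le infDist_nonneg)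

theorem exists_mem_adjSublevel_of_le {x y : E} (hle : f x ≤ f y) :
    ∃ c, x ∈ adjSublevel f c ∧ y ∈ adjSublevel f c ∧ f c = f y := by
  rcases hle.lt_or_eq with hlt | heq
  · exact ⟨y, mem_adjSublevel_of_lt hlt, self_mem_adjSublevel y, rfl⟩
  · have hS : {z | f z < f x} = {z | f z < f y} := by rw [heq]
    rcases le_total (infDist x {z | f z < f y}) (infDist y {z | f z < f y}) with hd | hd
    · exact ⟨y, mem_adjSublevel_of_infDist_le heq.le hd, self_mem_adjSublevel y, rfl⟩
    · exact ⟨x, self_mem_adjSublevel x, mem_adjSublevel_of_infDist_le heq.ge (hS ▸ hd), heq⟩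

theorem exists_mem_adjSublevel_pair (x y : E) :
    ∃ c, x ∈ adjSublevel f c ∧ y ∈ adjSublevel f c ∧ f c = max (f x) (f y) := by
  rcases le_total (f x) (f y) with hle | hle
  · rw [max_eq_right hle]
    exact exists_mem_adjSublevel_of_le hle
  · rw [max_eq_left hle]
    obtain ⟨c, hy, hx, hc⟩ := exists_mem_adjSublevel_of_le hle
    exact ⟨c, hx, hy, hc⟩

variable [NormedSpace ℝ E]

theorem QuasiconvexOn.convex_adjSublevel (hf : QuasiconvexOn ℝ univ f) (x : E) :
    Convex ℝ (adjSublevel f x) := by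
  have hle : Convex ℝ {y | f y ≤ f x} := by simpa using hf (f x)
  have hlt : Convex ℝ {y | f y < f x} := by simpa using hf.convex_lt (f x)
  unfold adjSublevel
  split_ifs with hmin
  · exact hle
  · simp only [not_forall, not_le] at hmin
    exact hle.inter (hlt.setOf_infDist_le hmin infDist_nonneg)

theorem quasiconvexOn_univ_of_convex_adjSublevel (h : ∀ x, Convex ℝ (adjSublevel f x)) :
    QuasiconvexOn ℝ univ f := by
  refine quasiconvexOn_iff_le_max.2 ⟨convex_univ, fun x _ y _ a b ha hb hab => ?_⟩
  obtain ⟨c, hx, hy, hc⟩ := exists_mem_adjSublevel_pair (f := f) x y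
  exact hc ▸ adjSublevel_subset_setOf_le c (h c hx hy ha hb hab)

end AdjSublevel

theorem quasiconvex_iff_adjSublevel_convex_general
    (f : X → EReal) :
    (∀ l : ℝ, Convex ℝ {y | f y ≤ (l : EReal)}) ↔
      ∀ x : X, Convex ℝ (adjSublevel f x) := by
  rw [← quasiconvexOn_univ_iff_convex_setOf_le_coe]
  exact ⟨QuasiconvexOn.convex_adjSublevel, quasiconvexOn_univ_of_convex_adjSublevel⟩

/-- An extended-real-valued function `f` is quasiconvex (all sublevel sets `S_λ`,
`λ ∈ ℝ`, are convex) if and only if the adjusted sublevel set `S^a_f(x)` is convex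
for every `x ∈ X`. -/
theorem quasiconvex_iff_adjSublevel_convex
    (f : X → EReal) (hf : ∀ y, f y ≠ ⊥) :
    (∀ l : ℝ, Convex ℝ {y | f y ≤ (l : EReal)}) ↔
      ∀ x : X, Convex ℝ (adjSublevel f x) :=
  quasiconvex_iff_adjSublevel_convex_general f
end

section
/- Let f : X → ℝ ∪ {+∞}, z ∈ X with z ∉ argmin f, and suppose there exist z₀ ∈ X, λ < f(z), and ε > 0 such that the ball z₀ + 2εB is contained in S^<_λ, and S^<_λ ⊆ S^<_{f(x)} for every x ∈ z + εB. Then for every x ∈ z + εB and every x* ∈ N^<(x) = {x* : ⟨x*, y − x⟩ ≤ 0 for all y ∈ S^<_{f(x)}}, one has ⟨x*, z − z₀⟩ ≥ ε‖x*‖₊. -/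
open Metric

variable {X : Type*} [NormedAddCommGroup X] [NormedSpace ℝ X] [CompleteSpace X]

/-- Lemma on the normal cone to strict sublevel sets: if `z₀ + 2εB ⊆ S^<_λ` and
`S^<_λ ⊆ S^<_{f(x)}` for all `x ∈ z + εB`, then every `x* ∈ N^<(x)` with
`x ∈ z + εB` satisfies `⟨x*, z − z₀⟩ ≥ ε‖x*‖₊`. -/
theorem normal_cone_strict_sublevel_bound
    (f : X → EReal) (z z₀ : X) (l : ℝ) (ε : ℝ) (hε : 0 < ε)
    (hzmin : ¬ ∀ y : X, f z ≤ f y) (hl : (l : EReal) < f z)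
    (hball : closedBall z₀ (2 * ε) ⊆ {y | f y < (l : EReal)})
    (hsub : ∀ x ∈ closedBall z ε, {y | f y < (l : EReal)} ⊆ {y | f y < f x}) :
    ∀ x ∈ closedBall z ε, ∀ p : WeakDual ℝ X,
      (∀ y : X, f y < f x → p (y - x) ≤ 0) →
      ε * ‖WeakDual.toStrongDual p‖ ≤ p (z - z₀) := by
  intro x hx p hp
  set q := WeakDual.toStrongDual p with hq
  have key : ∀ u : X, ‖u‖ ≤ 1 → p u * (2 * ε) ≤ p x - p z₀ := by
    intro u hu
    have hy : z₀ + (2 * ε) • u ∈ closedBall z₀ (2 * ε) := by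
      simp only [mem_closedBall, dist_eq_norm, add_sub_cancel_left, norm_smul,
        Real.norm_eq_abs, abs_of_pos (by positivity : (0:ℝ) < 2 * ε)]
      nlinarith
    have hfy : f (z₀ + (2 * ε) • u) < f x := hsub x hx (hball hy)
    have h0 := hp _ hfy
    have h1 : p z₀ + (2 * ε) * p u - p x ≤ 0 := by
      simpa [map_sub, map_add, map_smul] using h0
    linarith
  have hM0 : 0 ≤ p x - p z₀ := by simpa using key 0 (by simp)
  have hqle : ‖q‖ ≤ (p x - p z₀) / (2 * ε) := by
    apply ContinuousLinearMap.opNorm_le_bound _ (by positivity)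
    intro u
    rcases eq_or_ne u 0 with rfl | hu
    · simp
    · have hupos : 0 < ‖u‖ := norm_pos_iff.mpr hu
      have hv : ‖(‖u‖⁻¹ • u)‖ ≤ 1 := by
        simp [norm_smul, abs_of_pos (inv_pos.mpr hupos), inv_mul_cancel₀ hupos.ne']
      have hv' : ‖(-(‖u‖⁻¹ • u))‖ ≤ 1 := by simpa using hv
      have h1 := key _ hv
      have h2 := key _ hv'
      have hpv : p (‖u‖⁻¹ • u) = ‖u‖⁻¹ * p u := by simp [map_smul]
      rw [hpv] at h1
      rw [map_neg, hpv] at h2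
      have h1' : p u * (2 * ε) ≤ (p x - p z₀) * ‖u‖ := by
        have h := mul_le_mul_of_nonneg_right h1 hupos.le
        calc p u * (2 * ε) = ‖u‖⁻¹ * p u * (2 * ε) * ‖u‖ := by field_simp
          _ ≤ (p x - p z₀) * ‖u‖ := h
      have h2' : -p u * (2 * ε) ≤ (p x - p z₀) * ‖u‖ := by
        have h := mul_le_mul_of_nonneg_right h2 hupos.le
        calc -p u * (2 * ε) = -(‖u‖⁻¹ * p u) * (2 * ε) * ‖u‖ := by field_simp
          _ ≤ (p x - p z₀) * ‖u‖ := h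
      have habs : |p u| ≤ (p x - p z₀) / (2 * ε) * ‖u‖ := by
        rw [div_mul_eq_mul_div, le_div_iff₀ (by positivity)]
        rcases abs_cases (p u) with ⟨h, _⟩ | ⟨h, _⟩ <;> rw [h] <;> linarith
      have : ‖q u‖ = |p u| := rfl
      rw [this]
      exact habs
  have hxz : q (x - z) ≤ ‖q‖ * ε := by
    calc q (x - z) ≤ ‖q (x - z)‖ := le_abs_self _
    _ ≤ ‖q‖ * ‖x - z‖ := q.le_opNorm _
    _ ≤ ‖q‖ * ε := by
        apply mul_le_mul_of_nonneg_left _ (norm_nonneg q)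
        rw [← dist_eq_norm]; exact mem_closedBall.mp hx
  have hsplit : p x - p z₀ = q (x - z) + p (z - z₀) := by
    have h : q (x - z) = p x - p z := map_sub p x z
    rw [h, map_sub]; ring
  have h2e : ‖q‖ * (2 * ε) ≤ p x - p z₀ :=
    (le_div_iff₀ (by positivity)).mp hqle
  rw [hsplit] at h2e
  nlinarith [norm_nonneg q]
end

section
/- Let U be a topological space, I an index set, λ_i : U → [0,1] continuous functions forming a locally finite partition of unity, and A_i : U ⇉ X* set-valued maps with norm × weak*-closed graphs and values contained in the weak*-compact closed unit ball B* of X*. Then the set-valued map A(x) = Σ_{i ∈ I(x)} λ_i(x) A_i(x), where I(x) = {i : λ_i(x) > 0}, has closed graph with respect to the topology of U times the weak* topology of X*, and hence is upper semicontinuous. -/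
set_option maxHeartbeats 1000000

open Topology Filter Function

/-- Given a locally finite partition of unity `l i : U → [0,1]` and set-valued maps
`Ai i : U ⇉ X*` with graphs closed in the `U × weak*` product topology and values in
the weak*-compact closed dual unit ball, the convex-combination map
`A x = Σ_{i ∈ I(x)} l i x • Ai i x` (Minkowski sum over `I(x) = {i : l i x > 0}`)
has closed graph, and hence is upper semicontinuous. -/
theorem partition_of_unity_combination_closed_graph_and_usc
    {X : Type*} [NormedAddCommGroup X] [NormedSpace ℝ X] [CompleteSpace X]
    {U : Type*} [TopologicalSpace U] {ι : Type*}
    (l : ι → U → ℝ) (hcont : ∀ i, Continuous (l i))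
    (hnonneg : ∀ i x, 0 ≤ l i x) (hle : ∀ i x, l i x ≤ 1)
    (hlf : LocallyFinite fun i => Function.support (l i))
    (hsum : ∀ x, ∑ᶠ i, l i x = 1)
    (Ai : ι → U → Set (WeakDual ℝ X))
    (hAgraph : ∀ i, IsClosed {q : U × WeakDual ℝ X | q.2 ∈ Ai i q.1})
    (hAball : ∀ i x, Ai i x ⊆ {p : WeakDual ℝ X | ‖WeakDual.toStrongDual p‖ ≤ 1}) :
    IsClosed {q : U × WeakDual ℝ X |
      ∃ g : ι → WeakDual ℝ X, (∀ i, 0 < l i q.1 → g i ∈ Ai i q.1) ∧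
        q.2 = ∑ᶠ i, l i q.1 • g i} ∧
    ∀ x : U, ∀ Ω : Set (WeakDual ℝ X), IsOpen Ω →
      {p : WeakDual ℝ X | ∃ g : ι → WeakDual ℝ X,
          (∀ i, 0 < l i x → g i ∈ Ai i x) ∧ p = ∑ᶠ i, l i x • g i} ⊆ Ω →
      ∀ᶠ x' in 𝓝 x,
        {p : WeakDual ℝ X | ∃ g : ι → WeakDual ℝ X,
            (∀ i, 0 < l i x' → g i ∈ Ai i x') ∧ p = ∑ᶠ i, l i x' • g i} ⊆ Ω := by
  classical
  -- the value map
  set S : U → Set (WeakDual ℝ X) := fun x =>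
    {p | ∃ g : ι → WeakDual ℝ X, (∀ i, 0 < l i x → g i ∈ Ai i x) ∧ p = ∑ᶠ i, l i x • g i}
    with hSdef
  -- the dual unit ball is weak*-compact (Banach–Alaoglu)
  set K : Set (WeakDual ℝ X) := {p : WeakDual ℝ X | ‖WeakDual.toStrongDual p‖ ≤ 1} with hKdef
  have hK : IsCompact K := by
    have h := WeakDual.isCompact_closedBall (𝕜 := ℝ) (E := X) 0 1
    convert h using 1
    ext p
    simp [hKdef, Metric.mem_closedBall, dist_zero_right]
  -- a measurable selection of witnesses
  have hGex : ∀ q : U × WeakDual ℝ X, ∃ g : ι → WeakDual ℝ X,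
      q.2 ∈ S q.1 → (∀ i, 0 < l i q.1 → g i ∈ Ai i q.1) ∧ q.2 = ∑ᶠ i, l i q.1 • g i := by
    intro q
    by_cases h : q.2 ∈ S q.1
    · obtain ⟨g, hg⟩ := h
      exact ⟨g, fun _ => hg⟩
    · exact ⟨fun _ => 0, fun h' => absurd h' h⟩
  choose G hG using hGex
  -- values of `S` lie in the unit ball
  have hSK : ∀ x : U, S x ⊆ K := by
    intro x p hp
    obtain ⟨g, hg, rfl⟩ := hp
    have hfin : {i | l i x ≠ 0}.Finite := by
      simpa [Function.mem_support] using hlf.point_finite x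
    have hsub : (Function.support fun i => l i x • g i) ⊆ ↑hfin.toFinset := by
      intro i hi
      simp only [Set.Finite.coe_toFinset, Set.mem_setOf_eq]
      intro h0
      exact hi (by simp [h0])
    have hsub2 : (Function.support fun i => l i x) ⊆ ↑hfin.toFinset := by
      intro i hi
      simpa [Set.Finite.coe_toFinset] using hi
    rw [finsum_eq_sum_of_support_subset _ hsub]
    show ‖WeakDual.toStrongDual (∑ i ∈ hfin.toFinset, l i x • g i)‖ ≤ 1
    have hmap : WeakDual.toStrongDual (∑ i ∈ hfin.toFinset, l i x • g i)
        = ∑ i ∈ hfin.toFinset, l i x • WeakDual.toStrongDual (g i) := by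
      rw [map_sum]
      simp
    rw [hmap]
    calc ‖∑ i ∈ hfin.toFinset, l i x • WeakDual.toStrongDual (g i)‖
        ≤ ∑ i ∈ hfin.toFinset, ‖l i x • WeakDual.toStrongDual (g i)‖ := norm_sum_le _ _
      _ ≤ ∑ i ∈ hfin.toFinset, l i x := by
          refine Finset.sum_le_sum fun i hi => ?_
          have hne : l i x ≠ 0 := by simpa using (hfin.mem_toFinset.mp hi)
          have hpos : 0 < l i x := lt_of_le_of_ne (hnonneg i x) (Ne.symm hne)
          have hb : ‖WeakDual.toStrongDual (g i)‖ ≤ 1 := hAball i x (hg i hpos)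
          rw [norm_smul, Real.norm_eq_abs, abs_of_nonneg (hnonneg i x)]
          nlinarith
      _ = ∑ᶠ i, l i x := (finsum_eq_sum_of_support_subset _ hsub2).symm
      _ = 1 := hsum x
  -- closedness of the graph
  have hclosed : IsClosed {q : U × WeakDual ℝ X | q.2 ∈ S q.1} := by
    rw [isClosed_iff_clusterPt]
    rintro ⟨x, p⟩ hq
    have hne : (𝓝 (x, p) ⊓ 𝓟 {q : U × WeakDual ℝ X | q.2 ∈ S q.1}).NeBot := hq
    set F : Ultrafilter (U × WeakDual ℝ X) :=
      Ultrafilter.of (𝓝 (x, p) ⊓ 𝓟 {q : U × WeakDual ℝ X | q.2 ∈ S q.1}) with hFdef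
    have hFle : ↑F ≤ 𝓝 (x, p) ⊓ 𝓟 {q : U × WeakDual ℝ X | q.2 ∈ S q.1} := Ultrafilter.of_le _
    have hFnhds : ↑F ≤ 𝓝 (x, p) := hFle.trans inf_le_left
    have hFS : ∀ᶠ q in (F : Filter (U × WeakDual ℝ X)), q.2 ∈ S q.1 :=
      (hFle.trans inf_le_right) (mem_principal_self _)
    have hfst : Tendsto (fun q : U × WeakDual ℝ X => q.1) ↑F (𝓝 x) :=
      (continuous_fst.tendsto (x, p)).mono_left hFnhds
    -- locally finite neighbourhood
    obtain ⟨V, hV, hVfin⟩ := hlf x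
    set s : Finset ι := hVfin.toFinset with hsdef
    have hxV : x ∈ V := mem_of_mem_nhds hV
    have hVev : ∀ᶠ q in (F : Filter (U × WeakDual ℝ X)), q.1 ∈ V :=
      hfst.eventually (eventually_of_mem hV fun y hy => hy)
    -- limits of selections for active indices
    have key : ∀ i, 0 < l i x →
        ∃ b, b ∈ Ai i x ∧ Tendsto (fun q => G q i) (F : Filter (U × WeakDual ℝ X)) (𝓝 b) := by
      intro i hi
      have hli : Tendsto (fun q : U × WeakDual ℝ X => l i q.1) ↑F (𝓝 (l i x)) :=
        (((hcont i).comp continuous_fst).tendsto (x, p)).mono_left hFnhds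
      have hev : ∀ᶠ q in (F : Filter (U × WeakDual ℝ X)), 0 < l i q.1 :=
        hli.eventually (eventually_gt_nhds hi)
      have hmemK : ∀ᶠ q in (F : Filter (U × WeakDual ℝ X)), G q i ∈ K := by
        filter_upwards [hFS, hev] with q hqS hql
        exact hAball i q.1 ((hG q hqS).1 i hql)
      have hKmem : K ∈ (F.map fun q => G q i) := hmemK
      obtain ⟨b, hbK, hble⟩ := hK.ultrafilter_le_nhds (F.map fun q => G q i)
        (le_principal_iff.mpr hKmem)
      have htend : Tendsto (fun q => G q i) (F : Filter (U × WeakDual ℝ X)) (𝓝 b) := hble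
      have hgraph : ∀ᶠ q in (F : Filter (U × WeakDual ℝ X)),
          (fun q : U × WeakDual ℝ X => (q.1, G q i)) q ∈
            {r : U × WeakDual ℝ X | r.2 ∈ Ai i r.1} := by
        filter_upwards [hFS, hev] with q hqS hql
        exact (hG q hqS).1 i hql
      have hbA : b ∈ Ai i x :=
        (hAgraph i).mem_of_tendsto (hfst.prodMk_nhds htend) hgraph
      exact ⟨b, hbA, htend⟩
    choose b hbA hbtend using key
    refine ⟨fun i => if hi : 0 < l i x then b i hi else 0, fun i hi => by simp [dif_pos hi, hbA i hi], ?_⟩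
    set g : ι → WeakDual ℝ X := fun i => if hi : 0 < l i x then b i hi else 0 with hgdef
    -- reduce the finsum to a finite sum over s
    have hsupg : (Function.support fun i => l i x • g i) ⊆ ↑s := by
      intro i hi
      have hli : l i x ≠ 0 := by
        intro h0
        exact hi (by simp [h0])
      simp only [hsdef, Set.Finite.coe_toFinset, Set.mem_setOf_eq]
      exact ⟨x, hli, hxV⟩
    rw [finsum_eq_sum_of_support_subset _ hsupg]
    refine DFunLike.ext _ _ fun v => ?_
    -- evaluate at v and pass to the limit
    have hevalsum : ((∑ i ∈ s, l i x • g i : WeakDual ℝ X) : X → ℝ) v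
        = ∑ i ∈ s, l i x * g i v := by
      erw [sum_apply (F := X →L[ℝ] ℝ)]
      exact Finset.sum_congr rfl fun i _ => rfl
    have hevalp : Tendsto (fun q : U × WeakDual ℝ X => q.2 v) ↑F (𝓝 (p v)) :=
      (((WeakDual.eval_continuous v).comp continuous_snd).tendsto (x, p)).mono_left hFnhds
    have heveq : ∀ᶠ q in (F : Filter (U × WeakDual ℝ X)),
        q.2 v = ∑ i ∈ s, l i q.1 * G q i v := by
      filter_upwards [hFS, hVev] with q hqS hqV
      have hsupq : (Function.support fun i => l i q.1 • G q i) ⊆ ↑s := by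
        intro i hi
        have hli : l i q.1 ≠ 0 := by
          intro h0
          exact hi (by simp [h0])
        simp only [hsdef, Set.Finite.coe_toFinset, Set.mem_setOf_eq]
        exact ⟨q.1, hli, hqV⟩
      rw [(hG q hqS).2, finsum_eq_sum_of_support_subset _ hsupq]
      erw [sum_apply (F := X →L[ℝ] ℝ)]
      exact Finset.sum_congr rfl fun i _ => rfl
    have hlim : Tendsto (fun q : U × WeakDual ℝ X => ∑ i ∈ s, l i q.1 * G q i v) ↑F
        (𝓝 (∑ i ∈ s, l i x * g i v)) := by
      refine tendsto_finset_sum _ fun i _ => ?_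
      have hli : Tendsto (fun q : U × WeakDual ℝ X => l i q.1) ↑F (𝓝 (l i x)) :=
        (((hcont i).comp continuous_fst).tendsto (x, p)).mono_left hFnhds
      by_cases hi : 0 < l i x
      · have hgi : g i = b i hi := by simp [hgdef, dif_pos hi]
        have hGv : Tendsto (fun q : U × WeakDual ℝ X => G q i v) ↑F (𝓝 (b i hi v)) :=
          ((WeakDual.eval_continuous v).tendsto _).comp (hbtend i hi)
        rw [hgi]
        exact hli.mul hGv
      · have hlx : l i x = 0 := le_antisymm (not_lt.mp hi) (hnonneg i x)
        have hgi : g i = 0 := by simp [hgdef, dif_neg hi]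
        rw [hgi]
        have hz0 : l i x * (0 : WeakDual ℝ X) v = 0 := by rw [hlx]; ring
        rw [hz0]
        have hbound : ∀ᶠ q in (F : Filter (U × WeakDual ℝ X)),
            ‖l i q.1 * G q i v‖ ≤ l i q.1 * ‖v‖ := by
          filter_upwards [hFS] with q hqS
          rcases eq_or_lt_of_le (hnonneg i q.1) with h0 | h0
          · rw [← h0]; simp
          · have hmem : G q i ∈ K := hAball i q.1 ((hG q hqS).1 i h0)
            have : |G q i v| ≤ ‖v‖ := by
              have h1 : ‖WeakDual.toStrongDual (G q i) v‖ ≤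
                  ‖WeakDual.toStrongDual (G q i)‖ * ‖v‖ :=
                (WeakDual.toStrongDual (G q i)).le_opNorm v
              have h2 : ‖WeakDual.toStrongDual (G q i)‖ ≤ 1 := hmem
              calc |G q i v| = ‖WeakDual.toStrongDual (G q i) v‖ := rfl
                _ ≤ ‖WeakDual.toStrongDual (G q i)‖ * ‖v‖ := h1
                _ ≤ 1 * ‖v‖ := by nlinarith [norm_nonneg v]
                _ = ‖v‖ := one_mul _
            rw [Real.norm_eq_abs, abs_mul, abs_of_pos h0]
            exact mul_le_mul_of_nonneg_left this (le_of_lt h0)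
        have hz : Tendsto (fun q : U × WeakDual ℝ X => l i q.1 * ‖v‖) ↑F (𝓝 0) := by
          have := hli.mul_const ‖v‖
          rwa [hlx, zero_mul] at this
        exact squeeze_zero_norm' hbound hz
    have := tendsto_nhds_unique (hevalp.congr' heveq) hlim
    rw [hevalsum]
    exact this
  refine ⟨hclosed, ?_⟩
  -- upper semicontinuity
  intro x Ω hΩ hsub
  by_contra hcon
  rw [Filter.not_eventually] at hcon
  have hne : (𝓝 x ⊓ 𝓟 {x' | ¬ S x' ⊆ Ω}).NeBot := frequently_iff_neBot.mp hcon
  have hsel : ∀ x' : U, ∃ p : WeakDual ℝ X, ¬ S x' ⊆ Ω → p ∈ S x' ∧ p ∉ Ω := by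
    intro x'
    by_cases h : S x' ⊆ Ω
    · exact ⟨0, fun h' => absurd h h'⟩
    · obtain ⟨p, hp, hpn⟩ := Set.not_subset.mp h
      exact ⟨p, fun _ => ⟨hp, hpn⟩⟩
  choose p' hp' using hsel
  set F : Ultrafilter U := Ultrafilter.of (𝓝 x ⊓ 𝓟 {x' | ¬ S x' ⊆ Ω}) with hFdef
  have hFle : ↑F ≤ 𝓝 x ⊓ 𝓟 {x' | ¬ S x' ⊆ Ω} := Ultrafilter.of_le _
  have hFx : ↑F ≤ 𝓝 x := hFle.trans inf_le_left
  have hFT : ∀ᶠ x' in (F : Filter U), ¬ S x' ⊆ Ω :=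
    (hFle.trans inf_le_right) (mem_principal_self _)
  have hmemS : ∀ᶠ x' in (F : Filter U), p' x' ∈ S x' := hFT.mono fun x' h => (hp' x' h).1
  have hnot : ∀ᶠ x' in (F : Filter U), p' x' ∉ Ω := hFT.mono fun x' h => (hp' x' h).2
  have hmemK : ∀ᶠ x' in (F : Filter U), p' x' ∈ K := hmemS.mono fun x' h => hSK x' h
  obtain ⟨b, hbK, hble⟩ := hK.ultrafilter_le_nhds (F.map p') (le_principal_iff.mpr hmemK)
  have htend : Tendsto p' (F : Filter U) (𝓝 b) := hble
  have hgraph : ∀ᶠ x' in (F : Filter U),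
      (fun x' => (x', p' x')) x' ∈ {q : U × WeakDual ℝ X | q.2 ∈ S q.1} :=
    hmemS.mono fun x' h => h
  have hbS : b ∈ S x := hclosed.mem_of_tendsto ((show Tendsto id (F : Filter U) (𝓝 x) from hFx).prodMk_nhds htend) hgraph
  have hbΩ : b ∈ Ω := hsub hbS
  have hev : ∀ᶠ x' in (F : Filter U), p' x' ∈ Ω := htend.eventually (hΩ.mem_nhds hbΩ)
  obtain ⟨x', h1, h2⟩ := (hev.and hnot).exists
  exact h2 h1
end

section
/- Let C be a convex subset of ℝⁿ (or more generally of a Banach space), and suppose C is closed, or has nonempty interior, or is finite-dimensional. Then C contains all inside points of its closure, i.e., C ∈ 𝒟(X). -/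
variable {X : Type*} [NormedAddCommGroup X] [NormedSpace ℝ X] [CompleteSpace X]

/-- `S` is a face of the convex set `D`. -/
def IsFaceOf (D S : Set X) : Prop :=
  Convex ℝ S ∧ S ⊆ D ∧ ∀ x₁ ∈ D, ∀ x₂ ∈ D, ∀ t : ℝ, t ∈ Set.Ioo (0 : ℝ) 1 →
    t • x₁ + (1 - t) • x₂ ∈ S → x₁ ∈ S ∧ x₂ ∈ S

/-- The inside points of a convex set `C`: points of `C` not belonging to any proper
closed face of `cl C`. -/
def insidePoints (C : Set X) : Set X :=
  C \ ⋃ S ∈ {S : Set X | IsFaceOf (closure C) S ∧ IsClosed S ∧ S ≠ closure C}, S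

/-- Separation: if a convex set has nonempty interior and `x ∈ closure C \ C`, there is a
continuous linear functional attaining its sup over `closure C` at `x`, non-constantly. -/
theorem sep_functional {Y : Type*} [NormedAddCommGroup Y] [NormedSpace ℝ Y]
    {C : Set Y} (hC : Convex ℝ C) (hint : (interior C).Nonempty)
    {x : Y} (hx : x ∉ C) :
    ∃ f : Y →L[ℝ] ℝ, (∀ a ∈ closure C, f a ≤ f x) ∧ ∃ a ∈ C, f a < f x := by
  obtain ⟨w, hw⟩ := hint
  have hxint : x ∉ interior C := fun hmem => hx (interior_subset hmem)
  obtain ⟨f, hf⟩ := geometric_hahn_banach_open_point (hC.interior) isOpen_interior hxint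
  refine ⟨f, ?_, w, interior_subset hw, hf w hw⟩
  intro a ha
  -- approximate `a` by points in the interior
  have key : ∀ n : ℕ, f (((n : ℝ) + 2)⁻¹ • w + (1 - ((n : ℝ) + 2)⁻¹) • a) < f x := by
    intro n
    have h2 : (0:ℝ) < (n : ℝ) + 2 := by positivity
    have ht : (0:ℝ) < ((n : ℝ) + 2)⁻¹ := by positivity
    have hmem : ((n : ℝ) + 2)⁻¹ • w + (1 - ((n : ℝ) + 2)⁻¹) • a ∈ interior C := by
      apply hC.combo_interior_closure_mem_interior hw ha ht
      · have : ((n : ℝ) + 2)⁻¹ ≤ 1 := by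
          rw [inv_le_one_iff₀]; right; linarith
        linarith
      · ring
    exact hf _ hmem
  have htend : Filter.Tendsto (fun n : ℕ => ((n : ℝ) + 2)⁻¹) Filter.atTop (nhds 0) := by
    have h0 : Filter.Tendsto (fun n : ℕ => ((n : ℝ) + 2)) Filter.atTop Filter.atTop :=
      Filter.tendsto_atTop_add_const_right _ 2 tendsto_natCast_atTop_atTop
    exact h0.inv_tendsto_atTop
  have htend2 : Filter.Tendsto
      (fun n : ℕ => f (((n : ℝ) + 2)⁻¹ • w + (1 - ((n : ℝ) + 2)⁻¹) • a))
      Filter.atTop (nhds (f a)) := by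
    have h1 : Filter.Tendsto
        (fun n : ℕ => ((n : ℝ) + 2)⁻¹ • w + (1 - ((n : ℝ) + 2)⁻¹) • a)
        Filter.atTop (nhds ((0:ℝ) • w + (1 - (0:ℝ)) • a)) := by
      exact (htend.smul_const w).add (((tendsto_const_nhds.sub htend).smul_const a))
    simp only [zero_smul, sub_zero, one_smul, zero_add] at h1
    exact (f.continuous.tendsto a).comp h1
  exact le_of_tendsto htend2 (Filter.Eventually.of_forall fun n => (key n).le)

/-- From a functional attaining its sup on `closure C` at `x` non-constantly, build a proper
closed face of `closure C` containing `x`. -/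
theorem face_of_functional {C : Set X} (hC : Convex ℝ C) {x : X} (f : X →L[ℝ] ℝ)
    (h1 : ∀ a ∈ closure C, f a ≤ f x) (h2 : ∃ a ∈ closure C, f a < f x)
    (hxc : x ∈ closure C) :
    ∃ S : Set X, IsFaceOf (closure C) S ∧ IsClosed S ∧ S ≠ closure C ∧ x ∈ S := by
  refine ⟨{y ∈ closure C | f y = f x}, ⟨?_, fun y hy => hy.1, ?_⟩, ?_, ?_, hxc, rfl⟩
  · -- convexity
    intro y₁ hy₁ y₂ hy₂ a b ha hb hab
    refine ⟨hC.closure hy₁.1 hy₂.1 ha hb hab, ?_⟩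
    simp only [map_add, map_smul, hy₁.2, hy₂.2, smul_eq_mul]
    rw [← add_mul, hab, one_mul]
  · -- face property
    intro x₁ hx₁ x₂ hx₂ t ht hmem
    have e : t * f x₁ + (1 - t) * f x₂ = f x := by
      have := hmem.2
      simpa [map_add, map_smul] using this
    have l₁ : f x₁ ≤ f x := h1 _ hx₁
    have l₂ : f x₂ ≤ f x := h1 _ hx₂
    have e₁ : f x₁ = f x := by nlinarith [ht.1, ht.2]
    have e₂ : f x₂ = f x := by nlinarith [ht.1, ht.2]
    exact ⟨⟨hx₁, e₁⟩, ⟨hx₂, e₂⟩⟩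
  · exact isClosed_closure.inter (isClosed_eq f.continuous continuous_const)
  · obtain ⟨a, haC, halt⟩ := h2
    intro heq
    rw [← heq] at haC
    exact absurd haC.2 (ne_of_lt halt)

/-- The key step: a functional attaining its sup at `x` non-constantly shows `x` is not an
inside point. -/
theorem not_insidePoint_of_functional {C : Set X} (hC : Convex ℝ C) {x : X}
    (f : X →L[ℝ] ℝ) (h1 : ∀ a ∈ closure C, f a ≤ f x) (h2 : ∃ a ∈ closure C, f a < f x)
    (hx1 : x ∈ closure C) : x ∉ insidePoints (closure C) := by
  obtain ⟨S, hface, hcl, hne, hxS⟩ := face_of_functional hC f h1 h2 hx1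
  intro hx
  refine hx.2 (Set.mem_biUnion ?_ hxS)
  rw [Set.mem_setOf_eq, closure_closure]
  exact ⟨hface, hcl, hne⟩

/-- Michael's result: a convex set which is closed, or has nonempty interior, or is
finite-dimensional, belongs to the class `𝒟(X)`, i.e. it contains all inside points
of its closure. -/
theorem mem_D_of_closed_or_int_nonempty_or_finiteDimensional
    (C : Set X) (hC : Convex ℝ C)
    (h : IsClosed C ∨ (interior C).Nonempty ∨
      FiniteDimensional ℝ (Submodule.span ℝ C)) :
    insidePoints (closure C) ⊆ C := by
  rcases h with hcl | hint | hfd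
  · intro x hx
    exact hcl.closure_eq ▸ hx.1
  · intro x hx
    by_contra hxC
    obtain ⟨f, h1, a, haC, ha⟩ := sep_functional hC hint hxC
    exact not_insidePoint_of_functional hC f h1 ⟨a, subset_closure haC, ha⟩ hx.1 hx
  · intro x hx
    by_contra hxC
    have hx1 : x ∈ closure C := hx.1
    obtain ⟨c₀, hc₀⟩ := closure_nonempty_iff.mp ⟨x, hx1⟩
    set D : Set X := (fun y => -c₀ + y) '' C with hDdef
    have hD : Convex ℝ D := hC.translate (-c₀)
    set V : Submodule ℝ X := Submodule.span ℝ D with hVdef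
    have hVle : V ≤ Submodule.span ℝ C := by
      rw [hVdef, Submodule.span_le]
      rintro _ ⟨y, hy, rfl⟩
      exact Submodule.add_mem _ (Submodule.neg_mem _ (Submodule.subset_span hc₀))
        (Submodule.subset_span hy)
    haveI : FiniteDimensional ℝ (Submodule.span ℝ C) := hfd
    haveI hVfd : FiniteDimensional ℝ V := Submodule.finiteDimensional_of_le hVle
    have hVclosed : IsClosed (V : Set X) := Submodule.closed_of_finiteDimensional V
    have hDV : D ⊆ (V : Set X) := Submodule.subset_span
    set D₀ : Set V := Subtype.val ⁻¹' D with hD₀def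
    have hD₀conv : Convex ℝ D₀ := hD.linear_preimage V.subtype
    have hval : Subtype.val '' D₀ = D := by
      rw [hD₀def, Set.image_preimage_eq_of_subset]
      rwa [Subtype.range_coe]
    have h0D₀ : (0 : V) ∈ D₀ := by
      show ((0 : V) : X) ∈ D
      exact ⟨c₀, hc₀, by simp⟩
    have hspan : Submodule.span ℝ D₀ = ⊤ := by
      apply Submodule.map_injective_of_injective V.injective_subtype
      rw [Submodule.map_span, Submodule.map_top, Submodule.range_subtype]
      show Submodule.span ℝ (Subtype.val '' D₀) = V
      rw [hval, hVdef]
    have haff : affineSpan ℝ D₀ = ⊤ := by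
      apply AffineSubspace.coe_injective
      rw [AffineSubspace.top_coe, ← Set.insert_eq_of_mem h0D₀, affineSpan_insert_zero, hspan,
        Submodule.top_coe]
    have hintD₀ : (interior D₀).Nonempty :=
      (hD₀conv.interior_nonempty_iff_affineSpan_eq_top).mpr haff
    -- the translated point
    have hclosD : closure D = (fun y => -c₀ + y) '' closure C := by
      rw [hDdef]
      exact ((Homeomorph.addLeft (-c₀)).image_closure C).symm
    have hx₀cl : -c₀ + x ∈ closure D := by rw [hclosD]; exact ⟨x, hx1, rfl⟩
    have hx₀V : -c₀ + x ∈ V := closure_minimal hDV hVclosed hx₀cl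
    set x₁ : V := ⟨-c₀ + x, hx₀V⟩ with hx₁def
    have hx₁notD₀ : x₁ ∉ D₀ := by
      rintro ⟨y, hy, he⟩
      have : y = x := by
        have h' : -c₀ + y = -c₀ + x := he
        exact add_left_cancel h'
      exact hxC (this ▸ hy)
    obtain ⟨g, hg1, a₀, ha₀D₀, ha₀lt⟩ := sep_functional hD₀conv hintD₀ hx₁notD₀
    obtain ⟨F, hF, -⟩ := exists_extension_norm_eq V g
    -- membership of translated points of `closure C` in `closure D₀`
    have hmemcl : ∀ a ∈ closure C, ∀ (hm : -c₀ + a ∈ V), (⟨-c₀ + a, hm⟩ : V) ∈ closure D₀ := by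
      intro a ha hm
      rw [closure_subtype, hval]
      rw [hclosD]
      exact ⟨a, ha, rfl⟩
    have h1' : ∀ a ∈ closure C, F a ≤ F x := by
      intro a ha
      have haV : -c₀ + a ∈ V := closure_minimal hDV hVclosed (by rw [hclosD]; exact ⟨a, ha, rfl⟩)
      have := hg1 _ (hmemcl a ha haV)
      rw [← hF, ← hF] at this
      simp only [map_add, map_neg] at this
      have hx1F : F (x₁ : X) = -F c₀ + F x := by show F (-c₀ + x) = _; simp only [map_add, map_neg]
      linarith
    have h2' : ∃ a ∈ closure C, F a < F x := by
      obtain ⟨y, hy, hey⟩ := ha₀D₀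
      refine ⟨y, subset_closure hy, ?_⟩
      have h₁ : F (a₀ : X) = g a₀ := hF a₀
      have h₂ : F (x₁ : X) = g x₁ := hF x₁
      have hcoe : (a₀ : X) = -c₀ + y := hey.symm
      rw [hcoe] at h₁
      have h₃ : F ((-c₀ + x : X)) = g x₁ := h₂
      have := ha₀lt
      rw [← h₁, ← h₃] at this
      simp only [map_add, map_neg] at this
      linarith
    exact not_insidePoint_of_functional hC F h1' h2' hx1 hx
end

section
/- Let K ⊆ X* be weak*-compact and C ⊆ X. Then the function m : C × X → ℝ defined by m(x, y) = max_{x* ∈ T(x)} ⟨x*, y − x⟩, where T : C ⇉ K is norm-to-weak* upper semicontinuous with nonempty weak*-compact values, is upper semicontinuous on C × X (with the norm topology on X). -/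
open Topology Filter

/-- If `T : C ⇉ K` is norm-to-weak* upper semicontinuous with nonempty weak*-compact
values all contained in a weak*-compact set `K ⊆ X*`, then
`m(x, y) = max_{x* ∈ T(x)} ⟨x*, y − x⟩` is upper semicontinuous on `C × X`. -/
theorem sup_pairing_upperSemicontinuousOn
    {X : Type*} [NormedAddCommGroup X] [NormedSpace ℝ X] [CompleteSpace X]
    (K : Set (WeakDual ℝ X)) (hK : IsCompact K)
    (C : Set X) (T : X → Set (WeakDual ℝ X))
    (hTK : ∀ x ∈ C, T x ⊆ K)
    (hTne : ∀ x ∈ C, (T x).Nonempty)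
    (hTcomp : ∀ x ∈ C, IsCompact (T x))
    (hTusc : ∀ x ∈ C, ∀ Ω : Set (WeakDual ℝ X), IsOpen Ω → T x ⊆ Ω →
      ∀ᶠ x' in 𝓝[C] x, T x' ⊆ Ω) :
    UpperSemicontinuousOn
      (fun q : X × X => sSup ((fun p : WeakDual ℝ X => p (q.2 - q.1)) '' T q.1))
      (C ×ˢ (Set.univ : Set X)) := by
  -- Step 1: K is norm-bounded (Banach–Steinhaus)
  obtain ⟨M, hM0, hM⟩ : ∃ M : ℝ, 0 ≤ M ∧ ∀ p ∈ K, ∀ v : X, p v ≤ M * ‖v‖ := by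
    obtain ⟨C', hC'⟩ := banach_steinhaus (ι := K)
      (g := fun p => WeakDual.toStrongDual (p : WeakDual ℝ X))
      (fun v => by
        obtain ⟨R, hR⟩ := (hK.image (WeakDual.eval_continuous v)).isBounded.exists_norm_le
        exact ⟨R, fun p => hR _ ⟨p, p.2, rfl⟩⟩)
    refine ⟨max C' 0, le_max_right _ _, fun p hp v => ?_⟩
    calc p v ≤ |p v| := le_abs_self _
    _ = ‖(WeakDual.toStrongDual p) v‖ := rfl
    _ ≤ ‖WeakDual.toStrongDual p‖ * ‖v‖ := ContinuousLinearMap.le_opNorm _ _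
    _ ≤ max C' 0 * ‖v‖ := by
        gcongr
        exact le_trans (hC' ⟨p, hp⟩) (le_max_left _ _)
  rintro ⟨x, y⟩ ⟨hx, -⟩ c hc
  dsimp only at hc ⊢
  set m := sSup ((fun p : WeakDual ℝ X => p (y - x)) '' T x) with hm
  set δ : ℝ := (c - m) / 3 with hδdef
  have hδ : 0 < δ := by simp only [hδdef]; linarith
  set Ω : Set (WeakDual ℝ X) := {p | p (y - x) < m + δ} with hΩdef
  have hΩo : IsOpen Ω := isOpen_lt (WeakDual.eval_continuous (y - x)) continuous_const
  have hbdd : BddAbove ((fun p : WeakDual ℝ X => p (y - x)) '' T x) :=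
    ((hTcomp x hx).image (WeakDual.eval_continuous (y - x))).bddAbove
  have hΩT : T x ⊆ Ω := by
    intro p hp
    have : p (y - x) ≤ m := le_csSup hbdd ⟨p, hp, rfl⟩
    simpa [hΩdef] using lt_of_le_of_lt this (by linarith)
  have hev : ∀ᶠ x' in 𝓝[C] x, T x' ⊆ Ω := hTusc x hx Ω hΩo hΩT
  set ε : ℝ := δ / (M + 1) with hεdef
  have hε : 0 < ε := by positivity
  have hMε : M * ε < δ := by
    rw [hεdef]
    rw [mul_div_assoc'] at *
    rw [div_lt_iff₀ (by linarith)]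
    nlinarith
  have hev2 : ∀ᶠ x' in 𝓝[C] x, dist x' x < ε :=
    nhdsWithin_le_nhds (Metric.eventually_nhds_iff_ball.2 ⟨ε, hε, fun z hz => hz⟩)
  have hevC : ∀ᶠ x' in 𝓝[C] x, x' ∈ C := eventually_mem_nhdsWithin
  have hevy : ∀ᶠ y' in 𝓝 y, dist y' y < ε :=
    Metric.eventually_nhds_iff_ball.2 ⟨ε, hε, fun z hz => hz⟩
  rw [nhdsWithin_prod_eq, nhdsWithin_univ]
  filter_upwards [((hev.and hev2).and hevC).prod_mk hevy] with q hq
  obtain ⟨⟨⟨hqΩ, hqd⟩, hqC⟩, hqy⟩ := hq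
  obtain ⟨x', y'⟩ := q
  dsimp only at *
  have hne : ((fun p : WeakDual ℝ X => p (y' - x')) '' T x').Nonempty :=
    (hTne x' hqC).image _
  have hle : ∀ z ∈ (fun p : WeakDual ℝ X => p (y' - x')) '' T x',
      z ≤ m + δ + 2 * (M * ε) := by
    rintro z ⟨p, hp, rfl⟩
    have hpK : p ∈ K := hTK x' hqC hp
    have h1 : p (y - x) < m + δ := hqΩ hp
    have h2 : p (y' - y) ≤ M * ε := by
      calc p (y' - y) ≤ M * ‖y' - y‖ := hM p hpK _
      _ ≤ M * ε := by
          gcongr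
          exact le_of_lt (by simpa [dist_eq_norm] using hqy)
    have h3 : p (x - x') ≤ M * ε := by
      calc p (x - x') ≤ M * ‖x - x'‖ := hM p hpK _
      _ ≤ M * ε := by
          gcongr
          rw [norm_sub_rev]
          exact le_of_lt (by simpa [dist_eq_norm] using hqd)
    have heq : y' - x' = (y - x) + (y' - y) + (x - x') := by abel
    simp only [heq, map_add]
    linarith
  have := csSup_le hne hle
  have hfin : m + δ + 2 * (M * ε) < c := by
    have : c = m + 3 * δ := by rw [hδdef]; ring
    linarith
  linarith
end

section
/- Let f : X → ℝ ∪ {+∞} be quasiconvex and lower semicontinuous at x ∈ dom f \ argmin f, and suppose there exists λ < f(x) with int S_λ ≠ ∅. Then the normal cone operator N^a is norm-to-weak* closed at x: for every net (x_α, x*_α) with x*_α ∈ N^a(x_α), x_α → x in norm and x*_α → x* in the weak* topology, one has x* ∈ N^a(x). -/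
open Metric Classical Topology

variable {X : Type*} [NormedAddCommGroup X] [NormedSpace ℝ X] [CompleteSpace X]

/-- The normal cone operator to the adjusted sublevel sets. -/
noncomputable def adjNormal (f : X → EReal) (x : X) : Set (WeakDual ℝ X) :=
  {p | ∀ y ∈ adjSublevel f x, p (y - x) ≤ 0}

lemma mem_adjSublevel_of_lt_s18 (f : X → EReal) {x' z : X} (h : f z < f x') :
    z ∈ adjSublevel f x' := by
  unfold adjSublevel
  split
  · exact h.le
  · refine ⟨h.le, ?_⟩
    simp only [Set.mem_setOf_eq]
    rw [infDist_zero_of_mem (show z ∈ {w | f w < f x'} from h)]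
    exact infDist_nonneg

lemma strictSublevel_convex (f : X → EReal) (hfbot : ∀ y, f y ≠ ⊥)
    (hqc : ∀ l : ℝ, Convex ℝ {y | f y ≤ (l : EReal)}) (c : EReal) :
    Convex ℝ {z | f z < c} := by
  intro a ha b hb s t hs ht hst
  simp only [Set.mem_setOf_eq] at ha hb ⊢
  have haT : f a ≠ ⊤ := ne_top_of_lt ha
  have hbT : f b ≠ ⊤ := ne_top_of_lt hb
  have hea : f a = ((f a).toReal : EReal) := (EReal.coe_toReal haT (hfbot a)).symm
  have heb : f b = ((f b).toReal : EReal) := (EReal.coe_toReal hbT (hfbot b)).symm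
  have h1 : f a ≤ ((max (f a).toReal (f b).toReal : ℝ) : EReal) := by
    rw [hea]; exact_mod_cast le_max_left _ _
  have h2 : f b ≤ ((max (f a).toReal (f b).toReal : ℝ) : EReal) := by
    rw [heb]; exact_mod_cast le_max_right _ _
  have h3 : ((max (f a).toReal (f b).toReal : ℝ) : EReal) < c := by
    rcases max_cases (f a).toReal (f b).toReal with ⟨h, _⟩ | ⟨h, _⟩
    · rw [h, ← hea]; exact ha
    · rw [h, ← heb]; exact hb
  exact lt_of_le_of_lt (hqc _ h1 h2 hs ht hst) h3

/-- If `f` is quasiconvex and lower semicontinuous at `x ∈ dom f \ argmin f`, and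
some sublevel set `S_λ` with `λ < f(x)` has nonempty interior, then `N^a` is
norm-to-weak* closed at `x`: whenever a net `(x_α, x*_α)` with `x*_α ∈ N^a(x_α)`
converges to `(x, x*)` in the norm × weak* topology (equivalently, `(x, x*)` is in
the closure of the graph of `N^a`), one has `x* ∈ N^a(x)`. -/
theorem adjNormal_closed_at
    (f : X → EReal) (hfbot : ∀ y, f y ≠ ⊥)
    (hqc : ∀ l : ℝ, Convex ℝ {y | f y ≤ (l : EReal)})
    (x : X) (hlsc : LowerSemicontinuousAt f x)
    (hdom : f x ≠ ⊤) (hmin : ¬ ∀ y : X, f x ≤ f y)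
    (hl : ∃ l : ℝ, (l : EReal) < f x ∧ (interior {y | f y ≤ (l : EReal)}).Nonempty) :
    ∀ p : WeakDual ℝ X,
      (x, p) ∈ closure {q : X × WeakDual ℝ X | q.2 ∈ adjNormal f q.1} →
      p ∈ adjNormal f x := by
  intro p hp
  obtain ⟨l, hlx, u, hu⟩ := hl
  obtain ⟨r, hr0, hru⟩ : ∃ r > 0, ball u r ⊆ {y | f y ≤ (l : EReal)} := by
    obtain ⟨r, hr0, hball⟩ := Metric.isOpen_iff.1 isOpen_interior u hu
    exact ⟨r, hr0, hball.trans interior_subset⟩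
  have hfu : f u ≤ (l : EReal) := hru (mem_ball_self hr0)
  set S : Set X := {z | f z < f x} with hSdef
  have hSconv : Convex ℝ S := strictSublevel_convex f hfbot hqc (f x)
  have huS : u ∈ S := show f u < f x from lt_of_le_of_lt hfu hlx
  have hSne : S.Nonempty := ⟨u, huS⟩
  have hballS : ball u r ⊆ S := fun v hv =>
    show f v < f x from lt_of_le_of_lt (hru hv) hlx
  have huint : u ∈ interior S :=
    mem_interior.2 ⟨ball u r, hballS, isOpen_ball, mem_ball_self hr0⟩
  simp only [adjNormal, Set.mem_setOf_eq]
  intro y hy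
  rw [adjSublevel, if_neg hmin] at hy
  obtain ⟨hy1, hy2⟩ := hy
  simp only [Set.mem_setOf_eq] at hy1 hy2
  rw [← hSdef] at hy2
  -- Main step: the inequality holds for all perturbed points y_t
  have main : ∀ t : ℝ, 0 < t → t < 1 → p ((1 - t) • y + t • u - x) ≤ 0 := by
    intro t ht0 ht1
    set yt := (1 - t) • y + t • u with hytdef
    -- Membership lemma
    have hmem : ∃ δ > 0, ∀ x' : X, dist x' x < δ →
        yt ∈ adjSublevel f x' ∧ (l : EReal) < f x' := by
      rcases eq_or_lt_of_le (infDist_nonneg : (0:ℝ) ≤ infDist x S) with hρ | hρ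
      · -- distance from x to the strict sublevel set is zero
        have hyS0 : infDist y S = 0 :=
          le_antisymm (hy2.trans hρ.symm.le) infDist_nonneg
        have hyc : y ∈ closure S := (Metric.mem_closure_iff_infDist_zero hSne).2 hyS0
        have hytS : yt ∈ S := by
          have h := hSconv.combo_interior_closure_mem_interior huint hyc ht0
            (by linarith : (0:ℝ) ≤ 1 - t) (by ring)
          have heq : t • u + (1 - t) • y = yt := by rw [hytdef]; abel
          rw [heq] at h
          exact interior_subset h
        have hytlt : f yt < f x := hytS
        have hytT : f yt ≠ ⊤ := ne_top_of_lt hytlt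
        have hytμ : f yt ≤ ((max (f yt).toReal l : ℝ) : EReal) := by
          conv_lhs => rw [← EReal.coe_toReal hytT (hfbot yt)]
          exact_mod_cast le_max_left _ _
        have hlμ : (l : EReal) ≤ ((max (f yt).toReal l : ℝ) : EReal) := by
          exact_mod_cast le_max_right _ _
        have hμx : ((max (f yt).toReal l : ℝ) : EReal) < f x := by
          rcases max_cases (f yt).toReal l with ⟨h, _⟩ | ⟨h, _⟩
          · rw [h, EReal.coe_toReal hytT (hfbot yt)]; exact hytlt
          · rw [h]; exact hlx
        obtain ⟨δ, hδ0, hδ⟩ := Metric.eventually_nhds_iff.1 (hlsc _ hμx)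
        refine ⟨δ, hδ0, fun x' hx' => ?_⟩
        have hfx' : ((max (f yt).toReal l : ℝ) : EReal) < f x' := hδ hx'
        exact ⟨mem_adjSublevel_of_lt_s18 f (lt_of_le_of_lt hytμ hfx'),
          lt_of_le_of_lt hlμ hfx'⟩
      · -- distance from x to the strict sublevel set is positive
        refine ⟨t * infDist x S, mul_pos ht0 hρ, fun x' hx' => ?_⟩
        have hge : f x ≤ f x' := by
          by_contra hcon
          push_neg at hcon
          have hx'S : x' ∈ S := hcon
          have h : infDist x S ≤ dist x x' := Metric.infDist_le_dist_of_mem hx'S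
          rw [dist_comm] at hx'
          nlinarith
        have hfx'l : (l : EReal) < f x' := lt_of_lt_of_le hlx hge
        have hytle : f yt ≤ f x := by
          have hcx : f x = ((f x).toReal : EReal) := (EReal.coe_toReal hdom (hfbot x)).symm
          have h := hqc (f x).toReal (show f y ≤ _ by rw [← hcx]; exact hy1)
            (show f u ≤ _ by rw [← hcx]; exact hfu.trans hlx.le)
            (by linarith : (0:ℝ) ≤ 1 - t) ht0.le (by ring)
          rw [← hcx] at h
          exact h
        rcases lt_or_ge (f x) (f x') with hgt | hle
        · exact ⟨mem_adjSublevel_of_lt_s18 f (lt_of_le_of_lt hytle hgt), hfx'l⟩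
        · have heq : f x' = f x := le_antisymm hle hge
          refine ⟨?_, hfx'l⟩
          rw [adjSublevel, if_neg ?notmin]
          case notmin =>
            intro hall
            exact absurd (hall u) (not_le.2 (lt_of_le_of_lt hfu hfx'l))
          constructor
          · show f yt ≤ f x'
            rw [heq]; exact hytle
          · show infDist yt {z | f z < f x'} ≤ infDist x' {z | f z < f x'}
            rw [heq, ← hSdef]
            have h1 : infDist yt S ≤ (1 - t) * infDist y S := by
              by_contra hcon
              push_neg at hcon
              have h2 : infDist y S < infDist yt S / (1 - t) := by
                rw [lt_div_iff₀ (by linarith : (0:ℝ) < 1 - t)]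
                nlinarith
              obtain ⟨w, hwS, hwd⟩ := (Metric.infDist_lt_iff hSne).1 h2
              have hvS : (1 - t) • w + t • u ∈ S :=
                hSconv hwS huS (by linarith : (0:ℝ) ≤ 1 - t) ht0.le (by ring)
              have hd : dist yt ((1 - t) • w + t • u) = (1 - t) * dist y w := by
                rw [dist_eq_norm, dist_eq_norm]
                have hv : yt - ((1 - t) • w + t • u) = (1 - t) • (y - w) := by
                  rw [hytdef]; module
                rw [hv, norm_smul, Real.norm_eq_abs,
                  abs_of_pos (by linarith : (0:ℝ) < 1 - t)]
              have h3 : infDist yt S ≤ dist yt ((1 - t) • w + t • u) :=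
                Metric.infDist_le_dist_of_mem hvS
              rw [hd] at h3
              rw [lt_div_iff₀ (by linarith : (0:ℝ) < 1 - t)] at hwd
              nlinarith
            have h2 : infDist x S ≤ infDist x' S + dist x x' :=
              Metric.infDist_le_infDist_add_dist
            rw [dist_comm] at hx'
            nlinarith [mul_le_mul_of_nonneg_left hy2 (by linarith : (0:ℝ) ≤ 1 - t)]
    obtain ⟨δ, hδ0, hδ⟩ := hmem
    have hineq : ∀ ε : ℝ, 0 < ε → p (yt - x) ≤ 2 * ε := by
      intro ε hε
      set M : ℝ := 2 * (max (p (x - u)) 0 + 1) with hMdef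
      have hM0 : 0 < M := by
        have hmx : (0:ℝ) ≤ max (p (x - u)) 0 := le_max_right _ _
        nlinarith
      set δ' : ℝ := min δ (min (r / 4) (ε * r / (2 * M))) with hδ'def
      have hδ'0 : 0 < δ' := by
        apply lt_min hδ0
        exact lt_min (by linarith) (by positivity)
      have hδ'δ : δ' ≤ δ := min_le_left _ _
      have hδ'r : δ' ≤ r / 4 := (min_le_right _ _).trans (min_le_left _ _)
      have hδ'ε : δ' ≤ ε * r / (2 * M) := (min_le_right _ _).trans (min_le_right _ _)
      set U : Set (X × WeakDual ℝ X) :=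
        (ball x δ') ×ˢ {q : WeakDual ℝ X |
          p (yt - x) - ε < q (yt - x) ∧ q (x - u) < p (x - u) + 1} with hUdef
      have hUopen : IsOpen U := by
        apply IsOpen.prod isOpen_ball
        exact (isOpen_lt continuous_const (WeakDual.eval_continuous _)).inter
          (isOpen_lt (WeakDual.eval_continuous _) continuous_const)
      have hxpU : (x, p) ∈ U := by
        refine ⟨mem_ball_self hδ'0, ⟨?_, ?_⟩⟩
        · linarith
        · linarith
      obtain ⟨⟨x', p'⟩, hqU, hqS⟩ := (mem_closure_iff.1 hp) U hUopen hxpU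
      obtain ⟨hx'b, hp'1, hp'2⟩ := hqU
      have hx'd : dist x' x < δ' := mem_ball.1 hx'b
      obtain ⟨hytmem, hlx'⟩ := hδ x' (lt_of_lt_of_le hx'd hδ'δ)
      have hN : ∀ z ∈ adjSublevel f x', p' (z - x') ≤ 0 := hqS
      have hyt0 : p' yt - p' x' ≤ 0 := by
        have h := hN yt hytmem; rwa [map_sub] at h
      have hA0 : 0 ≤ p' x' - p' u := by
        have h := hN u (mem_adjSublevel_of_lt_s18 f (lt_of_le_of_lt hfu hlx'))
        rw [map_sub] at h
        linarith
      set A : ℝ := p' x' - p' u with hAdef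
      have hball2 : ∀ w : X, ‖w‖ ≤ r / 2 → p' w ≤ A := by
        intro w hw
        have hmem' : u + w ∈ adjSublevel f x' := by
          apply mem_adjSublevel_of_lt_s18 f
          refine lt_of_le_of_lt (hru ?_) hlx'
          rw [mem_ball, dist_eq_norm]
          simp only [add_sub_cancel_left]
          linarith
        have h := hN _ hmem'
        rw [map_sub, map_add] at h
        rw [hAdef]
        linarith
      have hbnd : ∀ d : X, p' d ≤ 2 * A / r * ‖d‖ := by
        intro d
        rcases eq_or_ne d 0 with h0 | h0
        · simp [h0]
        · have hd0 : 0 < ‖d‖ := norm_pos_iff.2 h0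
          have hkey := hball2 ((r / (2 * ‖d‖)) • d) ?_
          · rw [map_smul, smul_eq_mul] at hkey
            have hmul := mul_le_mul_of_nonneg_left hkey
              (le_of_lt (show (0:ℝ) < 2 * ‖d‖ / r by positivity))
            calc p' d = (2 * ‖d‖ / r) * (r / (2 * ‖d‖) * p' d) := by
                  field_simp
              _ ≤ (2 * ‖d‖ / r) * A := hmul
              _ = 2 * A / r * ‖d‖ := by ring
          · rw [norm_smul, Real.norm_eq_abs, abs_of_pos (by positivity)]
            have hh : r / (2 * ‖d‖) * ‖d‖ = r / 2 := by field_simp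
            rw [hh]
      have h2 : p' x' - p' x ≤ 2 * A / r * ‖x' - x‖ := by
        have h := hbnd (x' - x); rwa [map_sub] at h
      have h3 : ‖x' - x‖ < δ' := by rw [← dist_eq_norm]; exact hx'd
      have h4 : 2 * A / r * ‖x' - x‖ ≤ 2 * A / r * δ' := by
        apply mul_le_mul_of_nonneg_left h3.le (by positivity)
      have hAM : A ≤ M := by
        have hh1 : p' x - p' u < p (x - u) + 1 := by
          rw [map_sub] at hp'2; linarith
        have h5 : 2 * A / r * δ' ≤ A / 2 := by
          calc 2 * A / r * δ' ≤ 2 * A / r * (r / 4) :=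
                mul_le_mul_of_nonneg_left hδ'r (by positivity)
            _ = A / 2 := by field_simp; ring
        have h6 : p (x - u) ≤ max (p (x - u)) 0 := le_max_left _ _
        have h7 : A = (p' x' - p' x) + (p' x - p' u) := by rw [hAdef]; ring
        rw [hMdef]
        linarith
      have hfin : p' x' - p' x ≤ ε := by
        have h5 : 2 * A / r * δ' ≤ 2 * M / r * (ε * r / (2 * M)) := by
          apply mul_le_mul _ hδ'ε hδ'0.le (by positivity)
          apply div_le_div_of_nonneg_right _ hr0.le <;> linarith
        have heq2 : 2 * M / r * (ε * r / (2 * M)) = ε := by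
          field_simp
        linarith
      have hc2 : p' (yt - x) = (p' yt - p' x') + (p' x' - p' x) := by
        rw [map_sub]; ring
      have hc1 : p (yt - x) - ε < p' (yt - x) := hp'1
      rw [hc2] at hc1
      linarith
    by_contra hcon
    push_neg at hcon
    have h := hineq (p (yt - x) / 4) (by linarith)
    linarith
  -- limit t → 0
  by_contra hcon
  push_neg at hcon
  set a := p (y - x) with hadef
  set b := p (u - y) with hbdef
  set t : ℝ := min (1 / 2) (a / (2 * (|b| + 1))) with htdef
  have hb1 : (0:ℝ) < |b| + 1 := by positivity
  have ht0 : 0 < t := lt_min (by norm_num) (by positivity)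
  have ht1 : t < 1 := lt_of_le_of_lt (min_le_left _ _) (by norm_num)
  have hmain := main t ht0 ht1
  have heq : p ((1 - t) • y + t • u - x) = a + t * b := by
    have hv : (1 - t) • y + t • u - x = (y - x) + t • (u - y) := by module
    rw [hv, map_add, map_smul, smul_eq_mul, hadef, hbdef]
  rw [heq] at hmain
  have h1 : t ≤ a / (2 * (|b| + 1)) := min_le_right _ _
  have h2 : t * (2 * (|b| + 1)) ≤ a :=
    (le_div_iff₀ (by positivity : (0:ℝ) < 2 * (|b| + 1))).1 h1
  have h3 : -|b| ≤ b := neg_abs_le b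
  nlinarith [mul_le_mul_of_nonneg_left h3 ht0.le]
end
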